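/- Takahashi's decomposition theorem: for any context-free grammar G, Trees(G) = ⋃_{T ∈ sTrees(G)} Adj(T, sLoops(G)), where sTrees(G) is the (finite) set of simple trees arising as first components of decompositions of derivation trees, and sLoops(G) is the (finite) set of simple adjunct trees arising in second components of such decompositions. -/

import Mathlib

/-- Trees whose internal nodes are labeled by nonterminals in `V`
and whose leaves are labeled by elements of `L`. -/
inductive PTree (V L : Type) : Type
  | leaf : L → PTree V L
  | node : V → List (PTree V L) → PTree V L

namespace PTree

variable {V A L : Type}

/-- Leaf alphabet for contexts/adjunct trees: a letter-or-ε leaf, or the hole. -/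
abbrev Aug (A : Type) := Option A ⊕ Unit

/-- The root label of a tree: a nonterminal or a leaf label. -/
def rootLabel : PTree V L → V ⊕ L
  | .leaf a => .inr a
  | .node X _ => .inl X

/-- Set of nonterminals occurring in a tree. -/
def ntSet : PTree V L → Set V
  | .leaf _ => ∅
  | .node X ts => insert X ((ts.attach.map (fun ⟨t, _⟩ => ntSet t)).foldr (· ∪ ·) ∅)

/-- A tree is simple if no nonterminal occurs twice on a root-to-leaf path. -/
def Simple : PTree V L → Prop
  | .leaf _ => True
  | .node X ts => ∀ t ∈ ts, X ∉ ntSet t ∧ Simple t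

/-- Number of holes in a context / adjunct tree. -/
def holes : PTree V (Aug A) → ℕ
  | .leaf (.inr _) => 1
  | .leaf (.inl _) => 0
  | .node _ ts => (ts.attach.map (fun ⟨t, _⟩ => holes t)).sum

/-- Substitute the tree `T` for every hole. -/
def subst (T : PTree V (Option A)) : PTree V (Aug A) → PTree V (Option A)
  | .leaf (.inl a) => .leaf a
  | .leaf (.inr _) => T
  | .node X ts => .node X (ts.attach.map (fun ⟨t, _⟩ => subst T t))

/-- Embed a `(V,A)`-tree into trees with holes (no holes created). -/
def toAug : PTree V (Option A) → PTree V (Aug A)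
  | .leaf a => .leaf (.inl a)
  | .node X ts => .node X (ts.attach.map (fun ⟨t, _⟩ => toAug t))

/-- Yield of a `(V,A)`-tree. -/
def yield : PTree V (Option A) → List A
  | .leaf none => []
  | .leaf (some a) => [a]
  | .node _ ts => (ts.attach.map (fun ⟨t, _⟩ => yield t)).flatten

/-- Yield of a context / adjunct tree, holes contributing `ε`. -/
def yieldA : PTree V (Aug A) → List A
  | .leaf (.inl none) => []
  | .leaf (.inl (some a)) => [a]
  | .leaf (.inr _) => []
  | .node _ ts => (ts.attach.map (fun ⟨t, _⟩ => yieldA t)).flatten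

/-- Height of a tree. -/
def height : PTree V L → ℕ
  | .leaf _ => 0
  | .node _ ts => (ts.attach.map (fun ⟨t, _⟩ => height t)).foldr max 0 + 1

/-- Size (number of nodes) of a tree. -/
def tsize : PTree V L → ℕ
  | .leaf _ => 1
  | .node _ ts => (ts.attach.map (fun ⟨t, _⟩ => tsize t)).sum + 1

end PTree

open PTree

/-- A context-free grammar over `A` with nonterminals `V`:
a finite set of rules `D ⊆ V × (V ∪ A ∪ {ε})⁺` and a start symbol. -/
structure CFG (V A : Type) where
  rules : Set (V × List (V ⊕ Option A))
  rules_fin : rules.Finite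
  start : V

variable {V A : Type}

/-- A tree is a valid derivation w.r.t. the rules `D`. -/
inductive IsDeriv (D : Set (V × List (V ⊕ Option A))) : PTree V (Option A) → Prop
  | leaf (a : Option A) : IsDeriv D (.leaf a)
  | node (X : V) (ts : List (PTree V (Option A))) :
      (X, ts.map rootLabel) ∈ D → (∀ t ∈ ts, IsDeriv D t) → IsDeriv D (.node X ts)

/-- The set `Trees(G)` of derivation trees of `G`. -/
def TreesSet (G : CFG V A) : Set (PTree V (Option A)) :=
  {T | T.rootLabel = .inl G.start ∧ IsDeriv G.rules T}

/-- The language of `G`: yields of derivation trees. -/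
def lang (G : CFG V A) : Set (List A) := PTree.yield '' TreesSet G

/-- An adjunct tree is represented by its root nonterminal `X` together with a tree
over `V, A ∪ {X}` (the distinguished leaf `X` being the hole). -/
abbrev AdjT (V A : Type) := V × PTree V (Aug A)

/-- Wellformedness of an adjunct tree: root node labeled `X`, exactly one `X`-leaf. -/
def WFAdjunct (p : AdjT V A) : Prop :=
  (∃ ts, p.2 = PTree.node p.1 ts) ∧ p.2.holes = 1

/-- A simple adjunct tree: no nonterminal repeats on paths from a child of the root. -/
def SimpleAdjunct (p : AdjT V A) : Prop :=
  ∃ ts, p.2 = PTree.node p.1 ts ∧ ∀ t ∈ ts, Simple t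

/-- Root label of a subtree of an adjunct tree with root nonterminal `X`:
the hole leaf is labeled `X`. -/
def augRoot (X : V) : PTree V (Aug A) → V ⊕ Option A
  | .leaf (.inl a) => .inr a
  | .leaf (.inr _) => .inl X
  | .node Y _ => .inl Y

/-- An adjunct tree is extracted from derivation trees of `D`: every internal
node respects the rules. -/
inductive IsDerivA (D : Set (V × List (V ⊕ Option A))) (X : V) : PTree V (Aug A) → Prop
  | leaf (a : Aug A) : IsDerivA D X (.leaf a)
  | node (Y : V) (ts : List (PTree V (Aug A))) :
      (Y, ts.map (augRoot X)) ∈ D → (∀ t ∈ ts, IsDerivA D X t) → IsDerivA D X (.node Y ts)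

/-- `T ⊢_α T'` : `T'` is obtained from `T` by adjoining the adjunct tree `α`
at some occurrence of its root nonterminal. -/
def Adjoins (α : AdjT V A) (T T' : PTree V (Option A)) : Prop :=
  WFAdjunct α ∧
  ∃ (C : PTree V (Aug A)) (ts : List (PTree V (Option A))),
    C.holes = 1 ∧
    subst (.node α.1 ts) C = T ∧
    subst (subst (.node α.1 ts) α.2) C = T'

/-- `AdjChain L T T'` : `T'` is obtained from `T` by successively adjoining
the adjunct trees listed in `L`. -/
def AdjChain : List (AdjT V A) → PTree V (Option A) → PTree V (Option A) → Prop
  | [], T, T' => T = T'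
  | α :: L, T, T' => ∃ T₁, Adjoins α T T₁ ∧ AdjChain L T₁ T'

/-- `Adj⁺(T,S)` : trees obtained from `T` using exactly the adjunct trees of `S`,
each at least once. -/
def AdjPlus (T : PTree V (Option A)) (S : Set (AdjT V A)) : Set (PTree V (Option A)) :=
  {T' | ∃ L : List (AdjT V A), AdjChain L T T' ∧ {α | α ∈ L} = S}

/-- `Adj(T,S)` : trees obtained from `T` using adjunct trees of `S`, arbitrarily often. -/
def AdjStar (T : PTree V (Option A)) (S : Set (AdjT V A)) : Set (PTree V (Option A)) :=
  {T' | ∃ L : List (AdjT V A), AdjChain L T T' ∧ {α | α ∈ L} ⊆ S}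

namespace PTree
variable [DecidableEq V]

mutual
/-- Find the leftmost `X`-rooted subtree: returns the surrounding context
(with a hole in its place) and the subtree. -/
def extract (X : V) : PTree V (Option A) → Option (PTree V (Aug A) × PTree V (Option A))
  | .leaf _ => none
  | .node Y ts =>
    if Y = X then some (.leaf (.inr ()), .node Y ts)
    else match extractL X ts with
      | none => none
      | some (Cs, sub) => some (.node Y Cs, sub)

/-- List version of `extract`. -/
def extractL (X : V) : List (PTree V (Option A)) → Option (List (PTree V (Aug A)) × PTree V (Option A))
  | [] => none
  | t :: ts =>
    match extract X t with
    | some (C, sub) => some (C :: ts.map toAug, sub)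
    | none =>
      match extractL X ts with
      | some (Cs, sub) => some (toAug t :: Cs, sub)
      | none => none
end

/-- Takahashi's decomposition of a tree into a simple tree and a set of
simple adjunct trees. -/
def decomp : PTree V (Option A) → PTree V (Option A) × Set (AdjT V A)
  | .leaf a => (.leaf a, ∅)
  | .node X ts =>
    let rs := ts.attach.map (fun ⟨t, _⟩ => decomp t)
    let S := (rs.map Prod.snd).foldr (· ∪ ·) ∅
    match extractL X (rs.map Prod.fst) with
    | none => (.node X (rs.map Prod.fst), S)
    | some (Cs, sub) => (sub, insert (X, PTree.node X Cs) S)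

end PTree

/-- The simple trees arising from decompositions of derivation trees. -/
def sTrees (G : CFG V A) [DecidableEq V] : Set (PTree V (Option A)) :=
  {T' | ∃ T ∈ TreesSet G, (decomp T).1 = T'}

/-- The simple adjunct trees arising from decompositions of derivation trees. -/
def sLoops (G : CFG V A) [DecidableEq V] : Set (AdjT V A) :=
  {α | ∃ T ∈ TreesSet G, α ∈ (decomp T).2}

/-- Parikh map. -/
def parikh [DecidableEq A] (w : List A) : A → ℕ := fun a => w.count a

/-- Linear subsets of `ℕ^A`. -/
def IsLinear (S : Set (A → ℕ)) : Prop :=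
  ∃ (v₀ : A → ℕ) (k : ℕ) (v : Fin k → A → ℕ),
    S = {u | ∃ x : Fin k → ℕ, u = v₀ + ∑ i, x i • v i}

/-- Semilinear subsets of `ℕ^A`: finite unions of linear sets. -/
def IsSemilinear (S : Set (A → ℕ)) : Prop :=
  ∃ (n : ℕ) (f : Fin n → Set (A → ℕ)), (∀ i, IsLinear (f i)) ∧ S = ⋃ i, f i

/-! The loops cut out by `decomp` are contexts of derivation trees, so they respect the rules
once their hole is read as their root nonterminal (`IsDerivA`). Adjoining such a loop to a
derivation tree therefore yields a derivation tree with the same root, and the simple part of a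
derivation tree is again one. Conversely, `decomp` only cuts a loop at the root of a subtree, so
re-adjoining the loops, children first, rebuilds the original tree. -/

namespace PTree

variable {L : Type}

@[elab_as_elim]
theorem ind {P : PTree V L → Prop} (leaf : ∀ a, P (.leaf a))
    (node : ∀ X ts, (∀ t ∈ ts, P t) → P (.node X ts)) : ∀ t, P t
  | .leaf a => leaf a
  | .node X ts => node X ts fun t _ => ind leaf node t

@[simp] theorem rootLabel_node (X : V) (ts : List (PTree V L)) :
    rootLabel (.node X ts) = .inl X := rfl

@[simp] theorem holes_node (X : V) (ts : List (PTree V (Aug A))) :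
    holes (.node X ts) = (ts.map holes).sum := by
  simp [holes]

@[simp] theorem subst_node (U : PTree V (Option A)) (X : V) (ts : List (PTree V (Aug A))) :
    subst U (.node X ts) = .node X (ts.map (subst U)) := by
  simp [subst]

@[simp] theorem toAug_node (X : V) (ts : List (PTree V (Option A))) :
    toAug (.node X ts) = .node X (ts.map toAug) := by
  simp [toAug]

@[simp] theorem holes_toAug (t : PTree V (Option A)) : holes (toAug t) = 0 := by
  induction t using PTree.ind with
  | leaf a => simp [toAug, holes]
  | node X ts ih => simp +contextual [List.sum_eq_zero_iff, ih]

@[simp] theorem subst_toAug (U : PTree V (Option A)) (t : PTree V (Option A)) :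
    subst U (toAug t) = t := by
  induction t using PTree.ind with
  | leaf a => simp [toAug, subst]
  | node X ts ih => simpa [Function.comp_def] using List.map_congr_left ih

theorem rootLabel_subst {U : PTree V (Option A)} {X : V} (hU : rootLabel U = .inl X)
    (C : PTree V (Aug A)) : rootLabel (subst U C) = augRoot X C := by
  rcases C with (a | u) | ⟨Y, cs⟩ <;> simp [subst, augRoot, rootLabel, ← hU]

section Extract

variable [DecidableEq V] {X : V}

mutual

theorem extract_spec : ∀ {t : PTree V (Option A)} {C : PTree V (Aug A)} {sub : PTree V (Option A)},
    extract X t = some (C, sub) →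
      (∃ ts₀, sub = .node X ts₀) ∧ holes C = 1 ∧ subst sub C = t
  | .leaf _, _, _, h => by simp [extract] at h
  | .node Y ts, C, sub, h => by
    by_cases hY : Y = X
    · subst hY
      simp only [extract, if_pos, Option.some.injEq, Prod.mk.injEq] at h
      obtain ⟨rfl, rfl⟩ := h
      exact ⟨⟨ts, rfl⟩, by simp [holes], by simp [subst]⟩
    · rw [extract, if_neg hY] at h
      match he : extractL X ts, h with
      | some (Cs, sub'), h =>
        simp only [Option.some.injEq, Prod.mk.injEq] at h
        obtain ⟨rfl, rfl⟩ := h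
        obtain ⟨hX, hholes, hsubst⟩ := extractL_spec he
        exact ⟨hX, by simp [hholes], by simp [hsubst]⟩

theorem extractL_spec : ∀ {ts : List (PTree V (Option A))} {Cs : List (PTree V (Aug A))}
    {sub : PTree V (Option A)}, extractL X ts = some (Cs, sub) →
      (∃ ts₀, sub = .node X ts₀) ∧ (Cs.map holes).sum = 1 ∧ Cs.map (subst sub) = ts
  | [], _, _, h => by simp [extractL] at h
  | t :: ts, Cs, sub, h => by
    rw [extractL] at h
    match he : extract X t, h with
    | some (C, sub'), h =>
      simp only [Option.some.injEq, Prod.mk.injEq] at h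
      obtain ⟨rfl, rfl⟩ := h
      obtain ⟨hX, hholes, hsubst⟩ := extract_spec he
      exact ⟨hX, by simp [Function.comp_def, hholes], by simp [Function.comp_def, hsubst]⟩
    | none, h =>
      match he' : extractL X ts, h with
      | some (Cs', sub'), h =>
        simp only [Option.some.injEq, Prod.mk.injEq] at h
        obtain ⟨rfl, rfl⟩ := h
        obtain ⟨hX, hholes, hsubst⟩ := extractL_spec he'
        exact ⟨hX, by simp [hholes], by simp [hsubst]⟩

end

end Extract

end PTree

section Derivations

variable {D : Set (V × List (V ⊕ Option A))}

theorem isDeriv_node_iff {X : V} {ts : List (PTree V (Option A))} :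
    IsDeriv D (.node X ts) ↔ (X, ts.map rootLabel) ∈ D ∧ ∀ t ∈ ts, IsDeriv D t := by
  constructor
  · rintro (_ | ⟨_, _, hrule, hts⟩)
    exact ⟨hrule, hts⟩
  · rintro ⟨hrule, hts⟩
    exact .node X ts hrule hts

theorem IsDeriv.of_subst {U : PTree V (Option A)} {C : PTree V (Aug A)} (hC : holes C ≠ 0)
    (h : IsDeriv D (subst U C)) : IsDeriv D U := by
  induction C using PTree.ind with
  | leaf a =>
    rcases a with a | u
    · simp [holes] at hC
    · simpa [subst] using h
  | node Y cs ih =>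
    obtain ⟨c, hc, hc0⟩ : ∃ c ∈ cs, holes c ≠ 0 := by
      simpa [List.sum_eq_zero_iff] using hC
    exact ih c hc hc0 ((isDeriv_node_iff.1 (by simpa using h)).2 _ (List.mem_map_of_mem hc))

theorem IsDerivA.of_isDeriv_subst {U : PTree V (Option A)} {X : V} (hU : rootLabel U = .inl X)
    {C : PTree V (Aug A)} (h : IsDeriv D (subst U C)) : IsDerivA D X C := by
  induction C using PTree.ind with
  | leaf a => exact .leaf a
  | node Y cs ih =>
    obtain ⟨hrule, hcs⟩ := isDeriv_node_iff.1 (by simpa using h)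
    refine .node Y cs ?_ fun c hc => ih c hc (hcs _ (List.mem_map_of_mem hc))
    simpa [Function.comp_def, rootLabel_subst hU] using hrule

theorem IsDerivA.isDeriv_subst {X : V} {C : PTree V (Aug A)} (hC : IsDerivA D X C)
    {U : PTree V (Option A)} (hU : rootLabel U = .inl X) (hUD : IsDeriv D U) :
    IsDeriv D (subst U C) := by
  induction hC with
  | leaf a => rcases a with a | u <;> simp [subst, hUD, IsDeriv.leaf]
  | node Y cs hrule _ ih =>
    rw [subst_node, isDeriv_node_iff]
    refine ⟨?_, by simpa using ih⟩
    simpa [Function.comp_def, rootLabel_subst hU] using hrule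

theorem Adjoins.isDeriv {α : AdjT V A} {T T' : PTree V (Option A)} (h : Adjoins α T T')
    (hα : IsDerivA D α.1 α.2) (hT : IsDeriv D T) :
    IsDeriv D T' ∧ rootLabel T' = rootLabel T := by
  obtain ⟨⟨⟨cs, hαcs⟩, -⟩, C, ts, hC, rfl, rfl⟩ := h
  have hU : rootLabel (.node α.1 ts) = .inl α.1 := rfl
  have hUα : rootLabel (subst (.node α.1 ts) α.2) = .inl α.1 := by simp [hαcs]
  have hCD : IsDerivA D α.1 C := .of_isDeriv_subst hU hT
  refine ⟨hCD.isDeriv_subst hUα (hα.isDeriv_subst hU (hT.of_subst (by omega))), ?_⟩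
  rw [rootLabel_subst hU, rootLabel_subst hUα]

theorem AdjChain.isDeriv {L : List (AdjT V A)} {T T' : PTree V (Option A)}
    (h : AdjChain L T T') (hL : ∀ α ∈ L, IsDerivA D α.1 α.2) (hT : IsDeriv D T) :
    IsDeriv D T' ∧ rootLabel T' = rootLabel T := by
  induction L generalizing T with
  | nil => cases h; exact ⟨hT, rfl⟩
  | cons α L ih =>
    obtain ⟨T₁, hα, hL'⟩ := h
    obtain ⟨hT₁, hr₁⟩ := hα.isDeriv (hL α List.mem_cons_self) hT
    obtain ⟨hT', hr'⟩ := ih hL' (fun β hβ => hL β (List.mem_cons_of_mem α hβ)) hT₁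
    exact ⟨hT', hr'.trans hr₁⟩

end Derivations

section Adjunction

theorem Adjoins.node_append_cons {α : AdjT V A} {t t' : PTree V (Option A)}
    (h : Adjoins α t t') (X : V) (l r : List (PTree V (Option A))) :
    Adjoins α (.node X (l ++ t :: r)) (.node X (l ++ t' :: r)) := by
  obtain ⟨hα, C, ts, hC, rfl, rfl⟩ := h
  refine ⟨hα, .node X (l.map toAug ++ C :: r.map toAug), ts, ?_, ?_, ?_⟩ <;>
    simp [Function.comp_def, hC]

theorem AdjChain.node_append_cons {L : List (AdjT V A)} {t t' : PTree V (Option A)}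
    (h : AdjChain L t t') (X : V) (l r : List (PTree V (Option A))) :
    AdjChain L (.node X (l ++ t :: r)) (.node X (l ++ t' :: r)) := by
  induction L generalizing t with
  | nil => cases h; rfl
  | cons α L ih =>
    obtain ⟨t₁, hα, hL⟩ := h
    exact ⟨_, hα.node_append_cons X l r, ih hL⟩

theorem AdjChain.append {L₁ L₂ : List (AdjT V A)} {T T₁ T₂ : PTree V (Option A)}
    (h₁ : AdjChain L₁ T T₁) (h₂ : AdjChain L₂ T₁ T₂) : AdjChain (L₁ ++ L₂) T T₂ := by
  induction L₁ generalizing T with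
  | nil => cases h₁; exact h₂
  | cons α L ih =>
    obtain ⟨T', hα, hL⟩ := h₁
    exact ⟨T', hα, ih hL⟩

variable {S S' : Set (AdjT V A)} {T T₁ T₂ : PTree V (Option A)}

theorem mem_adjStar_self : T ∈ AdjStar T S :=
  ⟨[], rfl, by simp⟩

theorem mem_adjStar_trans (h₁ : T₁ ∈ AdjStar T S) (h₂ : T₂ ∈ AdjStar T₁ S) :
    T₂ ∈ AdjStar T S := by
  obtain ⟨L₁, hL₁, hS₁⟩ := h₁
  obtain ⟨L₂, hL₂, hS₂⟩ := h₂
  refine ⟨L₁ ++ L₂, hL₁.append hL₂, fun α hα => ?_⟩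
  rcases List.mem_append.1 hα with hα | hα
  exacts [hS₁ hα, hS₂ hα]

theorem mem_adjStar_of_adjoins {α : AdjT V A} (hα : α ∈ S) (h : Adjoins α T T₁) :
    T₁ ∈ AdjStar T S :=
  ⟨[α], ⟨T₁, h, rfl⟩, by simpa using hα⟩

theorem adjStar_mono (hS : S ⊆ S') : AdjStar T S ⊆ AdjStar T S' :=
  fun _ ⟨L, hL, hLS⟩ => ⟨L, hL, hLS.trans hS⟩

theorem node_mem_adjStar_node {X : V} {ss ts : List (PTree V (Option A))}
    (h : List.Forall₂ (fun s t => t ∈ AdjStar s S) ss ts) :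
    PTree.node X ts ∈ AdjStar (.node X ss) S := by
  suffices ∀ l, PTree.node X (l ++ ts) ∈ AdjStar (.node X (l ++ ss)) S by simpa using this []
  induction h with
  | nil => exact fun _ => mem_adjStar_self
  | @cons s t ss ts hst _ ih =>
    intro l
    obtain ⟨L, hL, hLS⟩ := hst
    refine mem_adjStar_trans ⟨L, hL.node_append_cons X l ss, hLS⟩ ?_
    simpa using ih (l ++ [t])

end Adjunction

theorem mem_foldr_union_empty {β : Type*} {l : List (Set β)} {x : β} :
    x ∈ l.foldr (· ∪ ·) ∅ ↔ ∃ s ∈ l, x ∈ s := by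
  induction l with
  | nil => simp
  | cons s l ih => simp [ih]

section Decomposition

variable [DecidableEq V] {D : Set (V × List (V ⊕ Option A))}

theorem decomp_node (X : V) (ts : List (PTree V (Option A))) :
    decomp (.node X ts) =
      match extractL X (ts.map fun t => (decomp t).1) with
      | none => (.node X (ts.map fun t => (decomp t).1),
          (ts.map fun t => (decomp t).2).foldr (· ∪ ·) ∅)
      | some (Cs, sub) => (sub, insert (X, .node X Cs)
          ((ts.map fun t => (decomp t).2).foldr (· ∪ ·) ∅)) := by
  simp [decomp, Function.comp_def]

theorem IsDeriv.decomp {t : PTree V (Option A)} (ht : IsDeriv D t) :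
    IsDeriv D (decomp t).1 ∧ rootLabel (decomp t).1 = rootLabel t ∧
      ∀ α ∈ (decomp t).2, IsDerivA D α.1 α.2 := by
  induction ht with
  | leaf a => simp [PTree.decomp, IsDeriv.leaf]
  | node X ts hrule _ ih =>
    set ts' := ts.map fun t => (PTree.decomp t).1
    have hnode : IsDeriv D (.node X ts') := by
      refine isDeriv_node_iff.2 ⟨?_, by simpa [ts'] using fun t ht => (ih t ht).1⟩
      rwa [List.map_map, Function.comp_def, List.map_congr_left fun t ht => (ih t ht).2.1]
    have hS : ∀ α ∈ (ts.map fun t => (PTree.decomp t).2).foldr (· ∪ ·) ∅,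
        IsDerivA D α.1 α.2 := by
      simp only [mem_foldr_union_empty, List.mem_map]
      rintro α ⟨-, ⟨t, ht, rfl⟩, hα⟩
      exact (ih t ht).2.2 α hα
    rw [decomp_node]
    cases he : extractL X ts' with
    | none => exact ⟨hnode, rfl, hS⟩
    | some p =>
      obtain ⟨Cs, sub⟩ := p
      obtain ⟨⟨ts₀, rfl⟩, hholes, hsubst⟩ := extractL_spec he
      have hloop : IsDeriv D (subst (.node X ts₀) (.node X Cs)) := by simpa [hsubst] using hnode
      refine ⟨hloop.of_subst (by simp [hholes]), rfl, ?_⟩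
      rintro α (rfl | hα)
      exacts [.of_isDeriv_subst rfl hloop, hS α hα]

theorem mem_adjStar_decomp (t : PTree V (Option A)) : t ∈ AdjStar (decomp t).1 (decomp t).2 := by
  induction t using PTree.ind with
  | leaf a => simpa [decomp] using mem_adjStar_self
  | node X ts ih =>
    set ts' := ts.map fun t => (decomp t).1
    set S := (ts.map fun t => (decomp t).2).foldr (· ∪ ·) ∅
    have hnode : PTree.node X ts ∈ AdjStar (.node X ts') S := by
      refine node_mem_adjStar_node ?_
      simp only [ts', List.forall₂_map_left_iff, List.forall₂_same]
      refine fun t ht => adjStar_mono (fun α hα => ?_) (ih t ht)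
      exact mem_foldr_union_empty.2 ⟨_, List.mem_map_of_mem ht, hα⟩
    rw [decomp_node]
    cases he : extractL X ts' with
    | none => exact hnode
    | some p =>
      obtain ⟨Cs, sub⟩ := p
      obtain ⟨⟨ts₀, rfl⟩, hholes, hsubst⟩ := extractL_spec he
      have hadj : Adjoins (X, .node X Cs) (.node X ts₀) (.node X ts') :=
        ⟨⟨⟨Cs, rfl⟩, by simp [hholes]⟩, .leaf (.inr ()), ts₀, by simp [holes], by simp [subst],
          by simp [subst, hsubst]⟩
      exact mem_adjStar_trans (mem_adjStar_of_adjoins (Set.mem_insert _ _) hadj)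
        (adjStar_mono (Set.subset_insert _ _) hnode)

end Decomposition

/-- Takahashi's decomposition theorem:
`Trees(G) = ⋃_{T ∈ sTrees(G)} Adj(T, sLoops(G))`. -/
theorem takahashi {V A : Type} [DecidableEq V] [Finite V] [Finite A] (G : CFG V A) :
    TreesSet G = ⋃ T ∈ sTrees G, AdjStar T (sLoops G) := by
  ext T
  simp only [Set.mem_iUnion]
  constructor
  · intro hT
    exact ⟨(decomp T).1, ⟨T, hT, rfl⟩,
      adjStar_mono (fun α hα => (⟨T, hT, hα⟩ : α ∈ sLoops G)) (mem_adjStar_decomp T)⟩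
  · rintro ⟨-, ⟨T₀, ⟨hroot, hT₀⟩, rfl⟩, L, hL, hLS⟩
    obtain ⟨hT₁, hroot₁, -⟩ := hT₀.decomp
    have hloops : ∀ α ∈ L, IsDerivA G.rules α.1 α.2 := by
      intro α hα
      obtain ⟨T₂, ⟨-, hT₂⟩, hα₂⟩ : α ∈ sLoops G := hLS hα
      exact hT₂.decomp.2.2 α hα₂
    obtain ⟨hT, hrootT⟩ := hL.isDeriv hloops hT₁
    exact ⟨hrootT.trans (hroot₁.trans hroot), hT⟩
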